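/- arXiv:2410.15617 — 3 statements merged into one kernel-verified Lean document; each statement's English description precedes it below -/
import Mathlib

section
/- Let u : ℝ → 𝓢(ℝ, ℝ) be continuously differentiable as a map from ℝ into the Schwartz space, and suppose u solves the Korteweg–de Vries equation ∂_t u + u ∂_x u + ∂_x³ u = 0 pointwise. Then the quantity E₃(t) = ∫_ℝ ( (1/3) u(t)(x)³ − (∂_x u(t))(x)² ) dx is constant in t. -/
open MeasureTheory Filter Topology SchwartzMap
namespace KdVAux

lemma schwartz_hasTemperateGrowth (g : SchwartzMap ℝ ℝ) :
    Function.HasTemperateGrowth ⇑g := by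
  refine ⟨g.smooth ⊤, fun n => ⟨0, SchwartzMap.seminorm ℝ 0 n g, fun x => ?_⟩⟩
  simpa using g.norm_iteratedFDeriv_le_seminorm ℝ n x

noncomputable def smul2 (f g : SchwartzMap ℝ ℝ) : SchwartzMap ℝ ℝ :=
  SchwartzMap.bilinLeftCLM (ContinuousLinearMap.mul ℝ ℝ) (schwartz_hasTemperateGrowth g) f

@[simp] lemma smul2_apply (f g : SchwartzMap ℝ ℝ) (x : ℝ) :
    smul2 f g x = f x * g x := rfl

noncomputable abbrev D : SchwartzMap ℝ ℝ →L[ℝ] SchwartzMap ℝ ℝ := SchwartzMap.derivCLM ℝ ℝ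

lemma sm_hasDerivAt (f : SchwartzMap ℝ ℝ) (x : ℝ) :
    HasDerivAt ⇑f (D f x) x := by
  simpa [SchwartzMap.derivCLM_apply] using (f.differentiable).differentiableAt.hasDerivAt

@[simp] lemma sm_neg_apply (f : SchwartzMap ℝ ℝ) (x : ℝ) : (-f) x = -(f x) := rfl

noncomputable def N (f : SchwartzMap ℝ ℝ) : ℝ :=
  SchwartzMap.seminorm ℝ 0 0 f + SchwartzMap.seminorm ℝ 2 0 f

lemma decayN (f : SchwartzMap ℝ ℝ) (x : ℝ) : (1 + x ^ 2) * |f x| ≤ N f := by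
  have h0 : |f x| ≤ SchwartzMap.seminorm ℝ 0 0 f := by
    simpa [Real.norm_eq_abs] using SchwartzMap.norm_le_seminorm ℝ f x
  have h2 : x ^ 2 * |f x| ≤ SchwartzMap.seminorm ℝ 2 0 f := by
    have := SchwartzMap.le_seminorm ℝ 2 0 f x
    simpa [Real.norm_eq_abs, norm_iteratedFDeriv_zero, sq_abs] using this
  have : (1 + x ^ 2) * |f x| = |f x| + x ^ 2 * |f x| := by ring
  rw [this, N]
  exact add_le_add h0 h2

lemma abs_le_N (f : SchwartzMap ℝ ℝ) (x : ℝ) : |f x| ≤ N f := by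
  have h := decayN f x
  nlinarith [abs_nonneg (f x), sq_nonneg x]

lemma continuous_N : Continuous N := by
  have h := schwartz_withSeminorms ℝ ℝ ℝ
  exact ((h.continuous_seminorm (0, 0)).add (h.continuous_seminorm (2, 0)))

lemma bound_arith {vv dv a b A B Mv Md Cu Cd x : ℝ}
    (h1 : (1 + x ^ 2) * |vv| ≤ Mv) (h2 : (1 + x ^ 2) * |dv| ≤ Md)
    (ha : |a| ≤ Cu) (hb : |b| ≤ Cu) (hA : |A| ≤ Cd) (hB : |B| ≤ Cd) :
    |1 / 3 * vv * (b * b + b * a + a * a) - dv * (B + A)| ≤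
      (Mv * (3 * Cu ^ 2) / 3 + Md * (2 * Cd)) * (1 + x ^ 2)⁻¹ := by
  have hs : (0 : ℝ) < 1 + x ^ 2 := by positivity
  have hMv : 0 ≤ Mv := le_trans (by positivity) h1
  have hMd : 0 ≤ Md := le_trans (by positivity) h2
  have hCu : 0 ≤ Cu := (abs_nonneg a).trans ha
  have hCd : 0 ≤ Cd := (abs_nonneg A).trans hA
  have hv' : |vv| ≤ Mv * (1 + x ^ 2)⁻¹ := by
    rw [← div_eq_mul_inv, le_div_iff₀ hs]
    linarith [h1]
  have hd' : |dv| ≤ Md * (1 + x ^ 2)⁻¹ := by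
    rw [← div_eq_mul_inv, le_div_iff₀ hs]
    linarith [h2]
  have key1 : |b * b + b * a + a * a| ≤ 3 * Cu ^ 2 := by
    calc |b * b + b * a + a * a| ≤ |b * b| + |b * a| + |a * a| := abs_add_three _ _ _
      _ = |b| * |b| + |b| * |a| + |a| * |a| := by rw [abs_mul, abs_mul, abs_mul]
      _ ≤ 3 * Cu ^ 2 := by nlinarith [abs_nonneg a, abs_nonneg b]
  have key2 : |B + A| ≤ 2 * Cd := by
    calc |B + A| ≤ |B| + |A| := abs_add_le _ _
      _ ≤ 2 * Cd := by linarith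
  calc |1 / 3 * vv * (b * b + b * a + a * a) - dv * (B + A)|
      ≤ |1 / 3 * vv * (b * b + b * a + a * a)| + |dv * (B + A)| := abs_sub _ _
    _ = 1 / 3 * |vv| * |b * b + b * a + a * a| + |dv| * |B + A| := by
        rw [abs_mul, abs_mul, abs_mul]
        norm_num
    _ ≤ 1 / 3 * (Mv * (1 + x ^ 2)⁻¹) * (3 * Cu ^ 2) + Md * (1 + x ^ 2)⁻¹ * (2 * Cd) := by
        gcongr <;> positivity
    _ = (Mv * (3 * Cu ^ 2) / 3 + Md * (2 * Cd)) * (1 + x ^ 2)⁻¹ := by ring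

noncomputable def gmap (f : SchwartzMap ℝ ℝ) : SchwartzMap ℝ ℝ :=
  (1 / 3 : ℝ) • smul2 (smul2 f f) f - smul2 (D f) (D f)

lemma gmap_apply (f : SchwartzMap ℝ ℝ) (x : ℝ) :
    gmap f x = 1 / 3 * (f x * f x * f x) - D f x * D f x := by
  simp [gmap, SchwartzMap.sub_apply, SchwartzMap.smul_apply, smul_eq_mul]

lemma hasDerivAt_energy (u u' : ℝ → SchwartzMap ℝ ℝ)
    (hu_deriv : ∀ t : ℝ,
      Tendsto (fun h : ℝ => h⁻¹ • (u (t + h) - u t)) (nhdsWithin 0 {(0 : ℝ)}ᶜ)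
        (nhds (u' t))) (t : ℝ) :
    HasDerivAt (fun r => ∫ x : ℝ, gmap (u r) x)
      (∫ x : ℝ, (u t x) ^ 2 * u' t x - 2 * D (u t) x * D (u' t) x) t := by
  have hmap : Filter.map (fun h : ℝ => t + h) (𝓝[≠] (0 : ℝ)) = 𝓝[≠] t := by
    simpa using (Homeomorph.addLeft t).map_punctured_nhds_eq 0
  have hv : Tendsto (fun y => (y - t)⁻¹ • (u y - u t)) (𝓝[≠] t) (𝓝 (u' t)) := by
    rw [← hmap, tendsto_map'_iff]
    refine (hu_deriv t).congr fun h => ?_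
    simp [Function.comp, add_sub_cancel_left]
  have hsub : Tendsto (fun y : ℝ => y - t) (𝓝[≠] t) (𝓝 0) := by
    have h1 : Tendsto (fun y : ℝ => y - t) (𝓝 t) (𝓝 0) := by
      simpa using (continuous_sub_right t).tendsto t
    exact h1.mono_left nhdsWithin_le_nhds
  have huy : Tendsto u (𝓝[≠] t) (𝓝 (u t)) := by
    have h1 : Tendsto (fun y => u t + (y - t) • ((y - t)⁻¹ • (u y - u t)))
        (𝓝[≠] t) (𝓝 (u t + (0 : ℝ) • u' t)) :=
      tendsto_const_nhds.add (hsub.smul hv)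
    rw [zero_smul, add_zero] at h1
    refine h1.congr' ?_
    filter_upwards [self_mem_nhdsWithin] with y hy
    have hyt : (y : ℝ) - t ≠ 0 := sub_ne_zero.mpr hy
    simp [smul_smul, mul_inv_cancel₀ hyt]
  have hDv : Tendsto (fun y => D ((y - t)⁻¹ • (u y - u t))) (𝓝[≠] t) (𝓝 (D (u' t))) :=
    (D.continuous.tendsto _).comp hv
  have hDu : Tendsto (fun y => D (u y)) (𝓝[≠] t) (𝓝 (D (u t))) :=
    (D.continuous.tendsto _).comp huy
  have hvx : ∀ x : ℝ, Tendsto (fun y => ((y - t)⁻¹ • (u y - u t) : SchwartzMap ℝ ℝ) x)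
      (𝓝[≠] t) (𝓝 (u' t x)) := fun x =>
    (((BoundedContinuousFunction.evalCLM ℝ x).comp (SchwartzMap.toBoundedContinuousFunctionCLM ℝ ℝ ℝ)).continuous.tendsto _).comp hv
  have hDvx : ∀ x : ℝ, Tendsto (fun y => D ((y - t)⁻¹ • (u y - u t)) x)
      (𝓝[≠] t) (𝓝 (D (u' t) x)) := fun x =>
    (((BoundedContinuousFunction.evalCLM ℝ x).comp (SchwartzMap.toBoundedContinuousFunctionCLM ℝ ℝ ℝ)).continuous.tendsto _).comp hDv
  have hux : ∀ x : ℝ, Tendsto (fun y => u y x) (𝓝[≠] t) (𝓝 (u t x)) := fun x =>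
    (((BoundedContinuousFunction.evalCLM ℝ x).comp (SchwartzMap.toBoundedContinuousFunctionCLM ℝ ℝ ℝ)).continuous.tendsto _).comp huy
  have hDux : ∀ x : ℝ, Tendsto (fun y => D (u y) x) (𝓝[≠] t) (𝓝 (D (u t) x)) := fun x =>
    (((BoundedContinuousFunction.evalCLM ℝ x).comp (SchwartzMap.toBoundedContinuousFunctionCLM ℝ ℝ ℝ)).continuous.tendsto _).comp hDu
  -- pointwise convergence of the difference quotients of the integrand
  have h_lim : ∀ x : ℝ, Tendsto (fun y =>
      1 / 3 * ((y - t)⁻¹ • (u y - u t) : SchwartzMap ℝ ℝ) x *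
        (u y x * u y x + u y x * u t x + u t x * u t x)
        - D ((y - t)⁻¹ • (u y - u t)) x * (D (u y) x + D (u t) x)) (𝓝[≠] t)
      (𝓝 ((u t x) ^ 2 * u' t x - 2 * D (u t) x * D (u' t) x)) := by
    intro x
    have hL : (u t x) ^ 2 * u' t x - 2 * D (u t) x * D (u' t) x =
        1 / 3 * u' t x * (u t x * u t x + u t x * u t x + u t x * u t x)
          - D (u' t) x * (D (u t) x + D (u t) x) := by ring
    rw [hL]
    exact (((hvx x).const_mul (1 / 3 : ℝ)).mul
        ((((hux x).mul (hux x)).add ((hux x).mul tendsto_const_nhds)).add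
          tendsto_const_nhds)).sub
      ((hDvx x).mul ((hDux x).add tendsto_const_nhds))
  -- eventual bounds
  have hNv : ∀ᶠ y in 𝓝[≠] t, N ((y - t)⁻¹ • (u y - u t)) ≤ N (u' t) + 1 :=
    ((continuous_N.tendsto _).comp hv).eventually (eventually_le_nhds (lt_add_one _))
  have hNdv : ∀ᶠ y in 𝓝[≠] t, N (D ((y - t)⁻¹ • (u y - u t))) ≤ N (D (u' t)) + 1 :=
    ((continuous_N.tendsto _).comp hDv).eventually (eventually_le_nhds (lt_add_one _))
  have hNu : ∀ᶠ y in 𝓝[≠] t, N (u y) ≤ N (u t) + 1 :=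
    ((continuous_N.tendsto _).comp huy).eventually (eventually_le_nhds (lt_add_one _))
  have hNDu : ∀ᶠ y in 𝓝[≠] t, N (D (u y)) ≤ N (D (u t)) + 1 :=
    ((continuous_N.tendsto _).comp hDu).eventually (eventually_le_nhds (lt_add_one _))
  have h_bound : ∀ᶠ y in 𝓝[≠] t, ∀ᵐ x : ℝ, ‖(1 / 3 *
        ((y - t)⁻¹ • (u y - u t) : SchwartzMap ℝ ℝ) x *
        (u y x * u y x + u y x * u t x + u t x * u t x)
        - D ((y - t)⁻¹ • (u y - u t)) x * (D (u y) x + D (u t) x) : ℝ)‖ ≤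
      ((N (u' t) + 1) * (3 * (N (u t) + 1) ^ 2) / 3
        + (N (D (u' t)) + 1) * (2 * (N (D (u t)) + 1))) * (1 + x ^ 2)⁻¹ := by
    filter_upwards [hNv, hNdv, hNu, hNDu] with y h1 h2 h3 h4
    refine Filter.Eventually.of_forall fun x => ?_
    rw [Real.norm_eq_abs]
    refine bound_arith ((decayN _ x).trans h1) ((decayN _ x).trans h2)
      ((abs_le_N (u t) x).trans (by linarith)) ((abs_le_N (u y) x).trans h3)
      ((abs_le_N (D (u t)) x).trans (by linarith)) ((abs_le_N (D (u y)) x).trans h4)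
  have hmeas : ∀ᶠ y in 𝓝[≠] t, AEStronglyMeasurable (fun x : ℝ =>
      1 / 3 * ((y - t)⁻¹ • (u y - u t) : SchwartzMap ℝ ℝ) x *
        (u y x * u y x + u y x * u t x + u t x * u t x)
        - D ((y - t)⁻¹ • (u y - u t)) x * (D (u y) x + D (u t) x)) volume := by
    refine Filter.Eventually.of_forall fun y => Continuous.aestronglyMeasurable ?_
    exact ((continuous_const.mul ((y - t)⁻¹ • (u y - u t) :
        SchwartzMap ℝ ℝ).continuous).mul
        ((((u y).continuous.mul (u y).continuous).add
          ((u y).continuous.mul (u t).continuous)).add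
          ((u t).continuous.mul (u t).continuous))).sub
      ((D ((y - t)⁻¹ • (u y - u t))).continuous.mul
        ((D (u y)).continuous.add (D (u t)).continuous))
  have hbint : Integrable (fun x : ℝ =>
      ((N (u' t) + 1) * (3 * (N (u t) + 1) ^ 2) / 3
        + (N (D (u' t)) + 1) * (2 * (N (D (u t)) + 1))) * (1 + x ^ 2)⁻¹) volume :=
    integrable_inv_one_add_sq.const_mul _
  have htend := tendsto_integral_filter_of_dominated_convergence _ hmeas h_bound hbint
    (Filter.Eventually.of_forall h_lim)
  rw [hasDerivAt_iff_tendsto_slope]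
  refine htend.congr' ?_
  filter_upwards [self_mem_nhdsWithin] with y hy
  have hyt : (y : ℝ) - t ≠ 0 := sub_ne_zero.mpr hy
  -- slope identity
  rw [slope_def_field,
    ← integral_sub (gmap (u y)).integrable (gmap (u t)).integrable, ← integral_div]
  congr 1
  funext x
  have hva : ((y - t)⁻¹ • (u y - u t) : SchwartzMap ℝ ℝ) x = (y - t)⁻¹ * (u y x - u t x) := by
    simp [SchwartzMap.smul_apply, SchwartzMap.sub_apply, smul_eq_mul]
  have hdva : D ((y - t)⁻¹ • (u y - u t)) x = (y - t)⁻¹ * (D (u y) x - D (u t) x) := by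
    rw [_root_.map_smul, _root_.map_sub]
    simp [SchwartzMap.smul_apply, SchwartzMap.sub_apply, smul_eq_mul]
  rw [gmap_apply, gmap_apply, hva, hdva]
  field_simp
  ring

lemma e_eq_zero (a a' : SchwartzMap ℝ ℝ)
    (hK : ∀ x, a' x + a x * deriv ⇑a x + deriv^[3] (⇑a) x = 0) :
    (∫ x : ℝ, (a x) ^ 2 * a' x - 2 * D a x * D a' x) = 0 := by
  set a1 := D a with ha1
  set a2 := D a1 with ha2
  set a3 := D a2 with ha3
  set a4 := D a3 with ha4
  have hda : deriv ⇑a = ⇑a1 := rfl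
  have hda1 : deriv ⇑a1 = ⇑a2 := rfl
  have hda2 : deriv ⇑a2 = ⇑a3 := rfl
  have h3 : deriv^[3] (⇑a) = ⇑a3 := by
    show deriv (deriv (deriv (deriv^[0] ⇑a))) = ⇑a3
    simp [hda, hda1, hda2, Function.iterate_zero]
  have hcoe : ⇑a' = fun x => -(a x * a1 x + a3 x) := by
    funext x
    have := hK x
    rw [hda, h3] at this
    linarith
  have hDa' : ∀ x, D a' x = -(a1 x * a1 x + a x * a2 x + a4 x) := by
    intro x
    have hd : HasDerivAt (fun y => -(a y * a1 y + a3 y))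
        (-(a1 x * a1 x + a x * a2 x + a4 x)) x := by
      have := (((sm_hasDerivAt a x).mul (sm_hasDerivAt a1 x)).add (sm_hasDerivAt a3 x)).neg
      exact this
    have : deriv ⇑a' x = -(a1 x * a1 x + a x * a2 x + a4 x) := by
      rw [hcoe]; exact hd.deriv
    simpa [SchwartzMap.derivCLM_apply] using this
  -- P and its derivative Q
  set P : SchwartzMap ℝ ℝ :=
    (-(1/4 : ℝ)) • smul2 (smul2 (smul2 a a) a) a - smul2 (smul2 a a) a2
      + (2 : ℝ) • smul2 (smul2 a a1) a1 + (2 : ℝ) • smul2 a1 a3 - smul2 a2 a2 with hP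
  set Q : SchwartzMap ℝ ℝ :=
    -(smul2 (smul2 (smul2 a a) a) a1) - smul2 (smul2 a a) a3
      + (2 : ℝ) • smul2 (smul2 a1 a1) a1 + (2 : ℝ) • smul2 (smul2 a a1) a2
      + (2 : ℝ) • smul2 a1 a4 with hQ
  have hQap : ∀ x, Q x = -(a x * a x * a x * a1 x) - a x * a x * a3 x
      + 2 * (a1 x * a1 x * a1 x) + 2 * (a x * a1 x * a2 x) + 2 * (a1 x * a4 x) := by
    intro x
    simp only [hQ, SchwartzMap.sub_apply, SchwartzMap.add_apply, SchwartzMap.smul_apply,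
      sm_neg_apply, smul2_apply, smul_eq_mul]
  have hPQ : ∀ x, HasDerivAt ⇑P (Q x) x := by
    intro x
    have h0 := sm_hasDerivAt a x
    have h1 := sm_hasDerivAt a1 x
    have h2 := sm_hasDerivAt a2 x
    have h3' := sm_hasDerivAt a3 x
    have hfun : ⇑P = fun y => (-(1/4 : ℝ)) * (a y * a y * a y * a y) - a y * a y * a2 y
        + 2 * (a y * a1 y * a1 y) + 2 * (a1 y * a3 y) - a2 y * a2 y := by
      funext y
      simp only [hP, SchwartzMap.sub_apply, SchwartzMap.add_apply, SchwartzMap.smul_apply,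
        sm_neg_apply, smul2_apply, smul_eq_mul]
    rw [hfun]
    have H := (((((((h0.mul h0).mul h0).mul h0).const_mul (-(1/4 : ℝ))).sub
      (((h0.mul h0).mul h2))).add ((((h0.mul h1).mul h1)).const_mul 2)).add
      ((h1.mul h3').const_mul 2)).sub (h2.mul h2)
    refine H.congr_deriv ?_
    rw [hQap x]
    show _ = _
    rw [← ha2, ← ha3, ← ha4]
    simp only [Pi.mul_apply]
    ring
  have hzero : (∫ x : ℝ, Q x) = 0 :=
    integral_eq_zero_of_hasDerivAt_of_integrable hPQ Q.integrable P.integrable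
  have hfin : (fun x : ℝ => (a x) ^ 2 * a' x - 2 * a1 x * D a' x) = fun x => Q x := by
    funext x
    have hax : a' x = -(a x * a1 x + a3 x) := by rw [hcoe]
    rw [hQap x, hDa' x, hax]
    ring
  rw [hfin]
  exact hzero

end KdVAux

open KdVAux

/-- **Conservation of the third KdV invariant.**
If `u : ℝ → 𝓢(ℝ, ℝ)` is continuously differentiable as a map into the Schwartz
space (with continuous derivative `u'`, where the derivative is taken in the
topology of the Schwartz space) and solves the Korteweg–de Vries equation
`∂ₜ u + u ∂ₓ u + ∂ₓ³ u = 0` pointwise, then the quantity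
`E₃(t) = ∫ (1/3) u(t)(x)³ − (∂ₓ u(t))(x)² dx` is constant in `t`. -/
theorem kdv_third_invariant_conservation
    (u u' : ℝ → SchwartzMap ℝ ℝ)
    (hu'_cont : Continuous u')
    (hu_deriv : ∀ t : ℝ,
      Tendsto (fun h : ℝ => h⁻¹ • (u (t + h) - u t)) (nhdsWithin 0 {(0 : ℝ)}ᶜ)
        (nhds (u' t)))
    (hKdV : ∀ t x : ℝ,
      u' t x + u t x * deriv (⇑(u t)) x + deriv^[3] (⇑(u t)) x = 0) :
    ∀ s t : ℝ,
      (∫ x : ℝ, ((1 : ℝ) / 3) * (u s x) ^ 3 - (deriv (⇑(u s)) x) ^ 2) =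
        ∫ x : ℝ, ((1 : ℝ) / 3) * (u t x) ^ 3 - (deriv (⇑(u t)) x) ^ 2 := by
  intro s t
  have key : ∀ r : ℝ, HasDerivAt (fun r : ℝ => ∫ x : ℝ, gmap (u r) x) 0 r := by
    intro r
    have h := hasDerivAt_energy u u' hu_deriv r
    have hz : (∫ x : ℝ, (u r x) ^ 2 * u' r x - 2 * D (u r) x * D (u' r) x) = 0 :=
      e_eq_zero (u r) (u' r) (hKdV r)
    rwa [hz] at h
  have hconst := is_const_of_deriv_eq_zero (f := fun r : ℝ => ∫ x : ℝ, gmap (u r) x)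
    (fun r => (key r).differentiableAt) (fun r => (key r).deriv) s t
  have hc : ∀ r : ℝ,
      (∫ x : ℝ, ((1 : ℝ) / 3) * (u r x) ^ 3 - (deriv (⇑(u r)) x) ^ 2) =
        ∫ x : ℝ, gmap (u r) x := by
    intro r
    congr 1
    funext x
    rw [gmap_apply]
    have hD : deriv (⇑(u r)) x = D (u r) x := rfl
    rw [hD]
    ring
  rw [hc s, hc t]
  exact hconst
end

section
/- Let δ > 0 and let u : ℝ × ℝ → ℝ be a smooth (C^∞) function that is 1-periodic in its second argument and solves ∂_t u + u ∂_x u + δ² ∂_x³ u = 0 for all (t,x) ∈ ℝ × ℝ. Then the momentum E₂(t) = ∫_{[0,1]} u(t,x)² dx is constant in t. -/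
open MeasureTheory intervalIntegral Metric

/-- **Conservation of momentum for the periodic KdV equation.**
If `u : ℝ → ℝ → ℝ` (time then space) is smooth, `1`-periodic in the spatial
variable, and solves `∂ₜ u + u ∂ₓ u + δ² ∂ₓ³ u = 0` with `δ > 0`, then the
momentum `E₂(t) = ∫_{[0,1]} u(t,x)² dx` is constant in `t`. -/
theorem periodic_kdv_momentum_conservation
    (δ : ℝ) (hδ : 0 < δ)
    (u : ℝ → ℝ → ℝ)
    (hu_smooth : ContDiff ℝ ((⊤ : ℕ∞) : WithTop ℕ∞) (Function.uncurry u))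
    (hu_per : ∀ t x : ℝ, u t (x + 1) = u t x)
    (hKdV : ∀ t x : ℝ,
      deriv (fun s => u s x) t + u t x * deriv (u t) x
        + δ ^ 2 * deriv^[3] (u t) x = 0) :
    ∀ s t : ℝ, (∫ x in (0 : ℝ)..1, (u s x) ^ 2) = ∫ x in (0 : ℝ)..1, (u t x) ^ 2 := by
  have hle : ((⊤ : ℕ∞) : WithTop ℕ∞) ≠ 0 := by simp
  have hUc : Continuous (Function.uncurry u) := hu_smooth.continuous
  -- joint time derivative
  set ut : ℝ → ℝ → ℝ := fun t x => fderiv ℝ (Function.uncurry u) (t, x) (1, 0) with hut_def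
  have hut : ∀ t x : ℝ, HasDerivAt (fun s => u s x) (ut t x) t := by
    intro t x
    have h1 : HasDerivAt (fun s : ℝ => (s, x)) ((1 : ℝ), (0 : ℝ)) t :=
      (hasDerivAt_id t).prodMk (hasDerivAt_const t x)
    have h2 : HasFDerivAt (Function.uncurry u) (fderiv ℝ (Function.uncurry u) (t, x)) (t, x) :=
      (hu_smooth.differentiable hle (t, x)).hasFDerivAt
    exact h2.comp_hasDerivAt t h1
  -- joint continuity of ut
  have hut_cont : Continuous (fun p : ℝ × ℝ => ut p.1 p.2) :=
    (hu_smooth.continuous_fderiv hle).clm_apply continuous_const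
  -- spatial smoothness
  have hux : ∀ t : ℝ, ContDiff ℝ ((⊤ : ℕ∞) : WithTop ℕ∞) (u t) := by
    intro t
    exact hu_smooth.comp (contDiff_const.prodMk contDiff_id)
  have hd1 : ∀ t x, HasDerivAt (u t) (deriv (u t) x) x :=
    fun t x => ((hux t).differentiable hle x).hasDerivAt
  have hd2 : ∀ t x, HasDerivAt (deriv (u t)) (deriv (deriv (u t)) x) x := by
    intro t x
    have := ((((hux t).iterate_deriv 1)).differentiable hle x).hasDerivAt
    simpa [Function.iterate_succ, Function.comp] using this
  have hd3 : ∀ t x, HasDerivAt (deriv (deriv (u t))) (deriv^[3] (u t) x) x := by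
    intro t x
    have := ((((hux t).iterate_deriv 2)).differentiable hle x).hasDerivAt
    simpa [Function.iterate_succ, Function.comp] using this
  -- KdV rewritten: ut = -(u uₓ + δ² uₓₓₓ)
  have hkdv' : ∀ t x : ℝ,
      ut t x = -(u t x * deriv (u t) x + δ ^ 2 * deriv^[3] (u t) x) := by
    intro t x
    have h := hKdV t x
    have h2 : deriv (fun s => u s x) t = ut t x := (hut t x).deriv
    rw [h2] at h; linarith
  -- periodicity of spatial derivatives
  have hper1 : ∀ t x, deriv (u t) (x + 1) = deriv (u t) x := by
    intro t x
    have h : (fun y => u t (y + 1)) = u t := funext fun y => hu_per t y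
    rw [← deriv_comp_add_const (u t) 1 x, h]
  have hper2 : ∀ t x, deriv (deriv (u t)) (x + 1) = deriv (deriv (u t)) x := by
    intro t x
    have h : (fun y => deriv (u t) (y + 1)) = deriv (u t) := funext fun y => hper1 t y
    rw [← deriv_comp_add_const (deriv (u t)) 1 x, h]
  -- the spatial antiderivative of 2 u uₜ
  have key : ∀ t : ℝ, (∫ x in (0:ℝ)..1, 2 * u t x * ut t x) = 0 := by
    intro t
    set g : ℝ → ℝ := fun y =>
      -(2/3 * u t y ^ 3
        + δ ^ 2 * (2 * (u t y * deriv (deriv (u t)) y) - deriv (u t) y ^ 2)) with hg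
    have hg' : ∀ x, HasDerivAt g (2 * u t x * ut t x) x := by
      intro x
      have hA := (hd1 t x).pow 3
      have hB := (hd1 t x).mul (hd3 t x)
      have hC := (hd2 t x).pow 2
      have hsum := ((hA.const_mul (2/3 : ℝ)).add
        (((hB.const_mul (2 : ℝ)).sub hC).const_mul (δ ^ 2))).neg
      refine hsum.congr_deriv ?_
      rw [hkdv' t x]; push_cast; ring
    have hcont : Continuous (fun x => 2 * u t x * ut t x) := by
      have h1 : Continuous (fun x : ℝ => u t x) :=
        hUc.comp (continuous_const.prodMk continuous_id)
      have h2 : Continuous (fun x : ℝ => ut t x) :=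
        hut_cont.comp (continuous_const.prodMk continuous_id)
      exact (continuous_const.mul h1).mul h2
    rw [integral_eq_sub_of_hasDerivAt (fun x _ => hg' x)
      (hcont.intervalIntegrable 0 1)]
    have hgp : g 1 = g 0 := by
      have e1 : u t 1 = u t 0 := by simpa using hu_per t 0
      have e2 : deriv (u t) 1 = deriv (u t) 0 := by simpa using hper1 t 0
      have e3 : deriv (deriv (u t)) 1 = deriv (deriv (u t)) 0 := by simpa using hper2 t 0
      simp [hg, e1, e2, e3]
    rw [hgp, sub_self]
  -- the momentum function has zero derivative
  set F : ℝ → ℝ := fun t => ∫ x in (0:ℝ)..1, (u t x) ^ 2 with hF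
  have hF' : ∀ t₀ : ℝ, HasDerivAt F 0 t₀ := by
    intro t₀
    have hK : IsCompact ((closedBall t₀ 1) ×ˢ (Set.uIcc (0:ℝ) 1)) :=
      (isCompact_closedBall _ _).prod isCompact_uIcc
    have hcont2 : Continuous (fun p : ℝ × ℝ => 2 * u p.1 p.2 * ut p.1 p.2) :=
      (continuous_const.mul hUc).mul hut_cont
    obtain ⟨C, hC⟩ := hK.exists_bound_of_continuousOn hcont2.continuousOn
    have hcu : ∀ t : ℝ, Continuous (fun x : ℝ => u t x) :=
      fun t => hUc.comp (continuous_const.prodMk continuous_id)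
    have hcut : ∀ t : ℝ, Continuous (fun x : ℝ => ut t x) :=
      fun t => hut_cont.comp (continuous_const.prodMk continuous_id)
    have main := intervalIntegral.hasDerivAt_integral_of_dominated_loc_of_deriv_le
      (F := fun t x => (u t x) ^ 2) (F' := fun t x => 2 * u t x * ut t x)
      (a := (0:ℝ)) (b := 1) (μ := volume) (x₀ := t₀) (bound := fun _ => C)
      (ball_mem_nhds t₀ one_pos)
      (Filter.Eventually.of_forall fun t =>
        ((hcu t).pow 2).aestronglyMeasurable)
      (((hcu t₀).pow 2).intervalIntegrable 0 1)
      (((continuous_const.mul (hcu t₀)).mul (hcut t₀)).aestronglyMeasurable)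
      ?_ (intervalIntegrable_const) ?_
    · have h0 := main.2
      rw [key t₀] at h0
      exact h0
    · refine Filter.Eventually.of_forall fun x hx t ht => ?_
      exact hC (t, x) (Set.mk_mem_prod (ball_subset_closedBall ht) (Set.uIoc_subset_uIcc hx))
    · refine Filter.Eventually.of_forall fun x _ t _ => ?_
      have := (hut t x).pow 2
      refine this.congr_deriv ?_
      push_cast; ring
  intro s t
  exact is_const_of_deriv_eq_zero (fun x => (hF' x).differentiableAt)
    (fun x => (hF' x).deriv) s t
end

section
/- Let δ > 0 and let u : ℝ × ℝ → ℝ be a smooth (C^∞) function that is 1-periodic in its second argument and solves ∂_t u + u ∂_x u + δ² ∂_x³ u = 0 for all (t,x) ∈ ℝ × ℝ. Then the quantity E₃(t) = ∫_{[0,1]} ( (1/3) u(t,x)³ − δ² (∂_x u(t,x))² ) dx is constant in t. -/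
open MeasureTheory intervalIntegral

local notation "S∞" => ((⊤ : ℕ∞) : WithTop ℕ∞)

noncomputable def pX (f : ℝ × ℝ → ℝ) : ℝ × ℝ → ℝ := fun p => fderiv ℝ f p (0, 1)
noncomputable def pT (f : ℝ × ℝ → ℝ) : ℝ × ℝ → ℝ := fun p => fderiv ℝ f p (1, 0)

lemma contDiff_pX {f : ℝ × ℝ → ℝ} (hf : ContDiff ℝ S∞ f) : ContDiff ℝ S∞ (pX f) :=
  (hf.fderiv_right (by norm_cast)).clm_apply contDiff_const

lemma contDiff_pT {f : ℝ × ℝ → ℝ} (hf : ContDiff ℝ S∞ f) : ContDiff ℝ S∞ (pT f) :=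
  (hf.fderiv_right (by norm_cast)).clm_apply contDiff_const

lemma hasDerivAt_pX {f : ℝ × ℝ → ℝ} (hf : ContDiff ℝ S∞ f) (t x : ℝ) :
    HasDerivAt (fun y => f (t, y)) (pX f (t, x)) x := by
  have h : HasDerivAt (fun y : ℝ => ((t, y) : ℝ × ℝ)) (0, 1) x :=
    (hasDerivAt_const x t).prodMk (hasDerivAt_id x)
  exact ((hf.differentiable (by simp) (t, x)).hasFDerivAt).comp_hasDerivAt x h

lemma hasDerivAt_pT {f : ℝ × ℝ → ℝ} (hf : ContDiff ℝ S∞ f) (t x : ℝ) :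
    HasDerivAt (fun s => f (s, x)) (pT f (t, x)) t := by
  have h : HasDerivAt (fun s : ℝ => ((s, x) : ℝ × ℝ)) (1, 0) t :=
    (hasDerivAt_id t).prodMk (hasDerivAt_const t x)
  exact ((hf.differentiable (by simp) (t, x)).hasFDerivAt).comp_hasDerivAt t h

lemma clairaut {f : ℝ × ℝ → ℝ} (hf : ContDiff ℝ S∞ f) (p : ℝ × ℝ) :
    pT (pX f) p = pX (pT f) p := by
  have hdf : ContDiff ℝ S∞ (fderiv ℝ f) := hf.fderiv_right (by norm_cast)
  have hsymm : IsSymmSndFDerivAt ℝ f p :=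
    (hf.contDiffAt).isSymmSndFDerivAt (by rw [minSmoothness_of_isRCLikeNormedField]; exact WithTop.coe_le_coe.2 (le_top : (2 : ℕ∞) ≤ ⊤))
  have h1 : ∀ v : ℝ × ℝ, fderiv ℝ (fun q => fderiv ℝ f q v) p
      = (fderiv ℝ (fderiv ℝ f) p).flip v := by
    intro v
    rw [fderiv_clm_apply (hdf.differentiable (by norm_cast) |>.differentiableAt)
      (differentiableAt_const v)]
    simp
  show fderiv ℝ (fun q => fderiv ℝ f q (0,1)) p (1,0)
      = fderiv ℝ (fun q => fderiv ℝ f q (1,0)) p (0,1)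
  rw [h1, h1]
  simpa using hsymm (1,0) (0,1)

lemma pX_periodic {f : ℝ × ℝ → ℝ} (hf : ContDiff ℝ S∞ f)
    (hper : ∀ t x, f (t, x + 1) = f (t, x)) : ∀ t x, pX f (t, x + 1) = pX f (t, x) := by
  intro t x
  rw [← (hasDerivAt_pX hf t (x + 1)).deriv, ← (hasDerivAt_pX hf t x).deriv]
  have hfun : (fun y => f (t, y + 1)) = fun y => f (t, y) := funext fun y => hper t y
  calc deriv (fun y => f (t, y)) (x + 1) = deriv (fun y => f (t, y + 1)) x :=
        (deriv_comp_add_const (fun y => f (t, y)) 1 x).symm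
    _ = deriv (fun y => f (t, y)) x := by rw [hfun]

lemma HasDerivAt.congr_d {f : ℝ → ℝ} {d d' : ℝ} {x : ℝ}
    (h : HasDerivAt f d x) (hd : d' = d) : HasDerivAt f d' x := hd ▸ h

/-- **Conservation of the third invariant for the periodic KdV equation.**
If `u : ℝ → ℝ → ℝ` (time then space) is smooth, `1`-periodic in the spatial
variable, and solves `∂ₜ u + u ∂ₓ u + δ² ∂ₓ³ u = 0` with `δ > 0`, then the
quantity `E₃(t) = ∫_{[0,1]} (1/3) u(t,x)³ − δ² (∂ₓ u(t,x))² dx` is constant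
in `t`. -/
theorem periodic_kdv_third_invariant_conservation
    (δ : ℝ) (hδ : 0 < δ)
    (u : ℝ → ℝ → ℝ)
    (hu_smooth : ContDiff ℝ ((⊤ : ℕ∞) : WithTop ℕ∞) (Function.uncurry u))
    (hu_per : ∀ t x : ℝ, u t (x + 1) = u t x)
    (hKdV : ∀ t x : ℝ,
      deriv (fun s => u s x) t + u t x * deriv (u t) x
        + δ ^ 2 * deriv^[3] (u t) x = 0) :
    ∀ s t : ℝ,
      (∫ x in (0 : ℝ)..1, ((1 : ℝ) / 3) * (u s x) ^ 3 - δ ^ 2 * (deriv (u s) x) ^ 2) =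
        ∫ x in (0 : ℝ)..1, ((1 : ℝ) / 3) * (u t x) ^ 3 - δ ^ 2 * (deriv (u t) x) ^ 2 := by
  intro s t
  set f : ℝ × ℝ → ℝ := Function.uncurry u with hfdef
  have hf : ContDiff ℝ S∞ f := hu_smooth
  have hf1 : ContDiff ℝ S∞ (pX f) := contDiff_pX hf
  have hf2 : ContDiff ℝ S∞ (pX (pX f)) := contDiff_pX hf1
  have hf3 : ContDiff ℝ S∞ (pX (pX (pX f))) := contDiff_pX hf2
  have hft : ContDiff ℝ S∞ (pT f) := contDiff_pT hf
  have hderiv1 : ∀ a x : ℝ, deriv (u a) x = pX f (a, x) := fun a x =>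
    HasDerivAt.deriv (f := u a) (hasDerivAt_pX hf a x)
  have hderiv3 : ∀ a x : ℝ, deriv^[3] (u a) x = pX (pX (pX f)) (a, x) := by
    intro a x
    have e1 : deriv (u a) = fun y => pX f (a, y) := funext fun y => hderiv1 a y
    have e2 : deriv (fun y => pX f (a, y)) = fun y => pX (pX f) (a, y) :=
      funext fun y => (hasDerivAt_pX hf1 a y).deriv
    have e3 : deriv (fun y => pX (pX f) (a, y)) = fun y => pX (pX (pX f)) (a, y) :=
      funext fun y => (hasDerivAt_pX hf2 a y).deriv
    have eiter : deriv^[3] (u a) = deriv (deriv (deriv (u a))) := rfl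
    rw [eiter, e1, e2, e3]
  have per0 : ∀ a x : ℝ, f (a, x + 1) = f (a, x) := fun a x => hu_per a x
  have per1 : ∀ a x : ℝ, pX f (a, x + 1) = pX f (a, x) := pX_periodic hf per0
  have per2 : ∀ a x : ℝ, pX (pX f) (a, x + 1) = pX (pX f) (a, x) := pX_periodic hf1 per1
  have per3 : ∀ a x : ℝ, pX (pX (pX f)) (a, x + 1) = pX (pX (pX f)) (a, x) :=
    pX_periodic hf2 per2
  have hpde : ∀ p : ℝ × ℝ, pT f p = -(f p * pX f p + δ ^ 2 * pX (pX (pX f)) p) := by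
    rintro ⟨a, x⟩
    have h0 := hKdV a x
    have ht : deriv (fun σ => u σ x) a = pT f (a, x) :=
      HasDerivAt.deriv (f := fun σ => u σ x) (hasDerivAt_pT hf a x)
    rw [ht, hderiv1, hderiv3] at h0
    have hux : u a x = f (a, x) := rfl
    rw [hux] at h0
    linarith
  have hpde1 : ∀ p : ℝ × ℝ, pT (pX f) p =
      -(pX f p ^ 2 + f p * pX (pX f) p + δ ^ 2 * pX (pX (pX (pX f))) p) := by
    rintro ⟨a, x⟩
    rw [clairaut hf]
    have hfun : (fun y => pT f (a, y))
        = fun y => -(f (a, y) * pX f (a, y) + δ ^ 2 * pX (pX (pX f)) (a, y)) :=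
      funext fun y => hpde (a, y)
    refine ((hasDerivAt_pX hft a x).unique ?_)
    rw [hfun]
    exact (((hasDerivAt_pX hf a x).mul (hasDerivAt_pX hf1 a x)).add
      ((hasDerivAt_pX hf3 a x).const_mul (δ ^ 2))).neg.congr_d (by ring)
  set T : ℝ × ℝ → ℝ := fun p => (1 : ℝ) / 3 * f p ^ 3 - δ ^ 2 * pX f p ^ 2 with hTdef
  set F : ℝ × ℝ → ℝ := fun p =>
      (-(f p ^ 4)) / 4 - δ ^ 2 * f p ^ 2 * pX (pX f) p + 2 * δ ^ 2 * f p * pX f p ^ 2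
        + 2 * δ ^ 4 * pX f p * pX (pX (pX f)) p - δ ^ 4 * pX (pX f) p ^ 2 with hFdef
  have hT : ContDiff ℝ S∞ T := by
    rw [hTdef]
    exact (contDiff_const.mul (hf.pow 3)).sub (contDiff_const.mul (hf1.pow 2))
  have hFsm : ContDiff ℝ S∞ F := by
    rw [hFdef]
    exact (((((hf.pow 4).neg.div_const 4).sub
      ((contDiff_const.mul (hf.pow 2)).mul hf2)).add
      ((contDiff_const.mul hf).mul (hf1.pow 2))).add
      ((contDiff_const.mul hf1).mul hf3)).sub (contDiff_const.mul (hf2.pow 2))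
  have hTt : ContDiff ℝ S∞ (pT T) := contDiff_pT hT
  have key : ∀ p : ℝ × ℝ, pT T p = pX F p := by
    rintro ⟨a, x⟩
    have hTval : pT T (a, x)
        = f (a, x) ^ 2 * pT f (a, x) - 2 * δ ^ 2 * pX f (a, x) * pT (pX f) (a, x) := by
      refine (hasDerivAt_pT hT a x).unique ?_
      rw [hTdef]
      exact ((((hasDerivAt_pT hf a x).pow 3).const_mul ((1 : ℝ) / 3)).sub
        (((hasDerivAt_pT hf1 a x).pow 2).const_mul (δ ^ 2))).congr_d (by push_cast; ring)
    have hFval : pX F (a, x)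
        = -(f (a, x) ^ 3 * pX f (a, x)) - 2 * δ ^ 2 * f (a, x) * pX f (a, x) * pX (pX f) (a, x)
          - δ ^ 2 * f (a, x) ^ 2 * pX (pX (pX f)) (a, x) + 2 * δ ^ 2 * pX f (a, x) ^ 3
          + 4 * δ ^ 2 * f (a, x) * pX f (a, x) * pX (pX f) (a, x)
          + 2 * δ ^ 4 * pX (pX f) (a, x) * pX (pX (pX f)) (a, x)
          + 2 * δ ^ 4 * pX f (a, x) * pX (pX (pX (pX f))) (a, x)
          - 2 * δ ^ 4 * pX (pX f) (a, x) * pX (pX (pX f)) (a, x) := by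
      refine (hasDerivAt_pX hFsm a x).unique ?_
      rw [hFdef]
      have g1 := hasDerivAt_pX hf a x
      have g2 := hasDerivAt_pX hf1 a x
      have g3 := hasDerivAt_pX hf2 a x
      have g4 := hasDerivAt_pX hf3 a x
      exact (((((g1.pow 4).neg.div_const 4).sub
        (((g1.pow 2).const_mul (δ ^ 2)).mul g3)).add
        ((g1.const_mul (2 * δ ^ 2)).mul (g2.pow 2))).add
        ((g2.const_mul (2 * δ ^ 4)).mul g4)).sub
        ((g3.pow 2).const_mul (δ ^ 4)) |>.congr_d (by push_cast; simp only [Pi.pow_apply]; ring)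
    rw [hTval, hFval, hpde (a, x), hpde1 (a, x)]
    ring
  -- derivative of the energy is zero
  have hTtc : Continuous (pT T) := hTt.continuous
  have hE : ∀ t₀ : ℝ, HasDerivAt (fun τ => ∫ x in (0 : ℝ)..1, T (τ, x)) 0 t₀ := by
    intro t₀
    obtain ⟨C, hC⟩ := ((isCompact_closedBall t₀ 1).prod (isCompact_uIcc
      (a := (0 : ℝ)) (b := 1))).exists_bound_of_continuousOn hTtc.continuousOn
    have main := intervalIntegral.hasDerivAt_integral_of_dominated_loc_of_deriv_le
      (F := fun τ x => T (τ, x)) (F' := fun τ x => pT T (τ, x)) (x₀ := t₀)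
      (a := (0 : ℝ)) (b := 1) (bound := fun _ => C) (μ := volume) (Metric.ball_mem_nhds t₀ zero_lt_one)
      (Filter.Eventually.of_forall fun τ =>
        (hT.continuous.comp (Continuous.prodMk_right τ)).aestronglyMeasurable)
      ((hT.continuous.comp (Continuous.prodMk_right t₀)).intervalIntegrable 0 1)
      ((hTtc.comp (Continuous.prodMk_right t₀)).aestronglyMeasurable)
      (Filter.Eventually.of_forall fun x hx τ hτ =>
        hC (τ, x) (Set.mk_mem_prod (Metric.ball_subset_closedBall hτ)
          (Set.uIoc_subset_uIcc hx)))
      (intervalIntegrable_const)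
      (Filter.Eventually.of_forall fun x _ τ _ => hasDerivAt_pT hT τ x)
    have hzero : (∫ x in (0 : ℝ)..1, pT T (t₀, x)) = 0 := by
      have h1 : (∫ x in (0 : ℝ)..1, pT T (t₀, x)) = F (t₀, 1) - F (t₀, 0) := by
        refine intervalIntegral.integral_eq_sub_of_hasDerivAt (f := fun y => F (t₀, y))
          (fun y _ => ?_) ((hTtc.comp (Continuous.prodMk_right t₀)).intervalIntegrable 0 1)
        exact (key (t₀, y)).symm ▸ hasDerivAt_pX hFsm t₀ y
      have hFper : F (t₀, 1) = F (t₀, 0) := by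
        have h01 : (1 : ℝ) = 0 + 1 := by norm_num
        rw [h01, hFdef]
        simp only [per0, per1, per2, per3]
      rw [h1, hFper, sub_self]
    have h2 := main.2
    rw [hzero] at h2
    exact h2
  have hconst := is_const_of_deriv_eq_zero (𝕜 := ℝ)
    (f := fun τ => ∫ x in (0 : ℝ)..1, T (τ, x))
    (fun τ => (hE τ).differentiableAt) (fun τ => (hE τ).deriv) s t
  have hrepr : ∀ a : ℝ,
      (∫ x in (0 : ℝ)..1, ((1 : ℝ) / 3) * (u a x) ^ 3 - δ ^ 2 * (deriv (u a) x) ^ 2)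
        = ∫ x in (0 : ℝ)..1, T (a, x) := by
    intro a
    refine intervalIntegral.integral_congr fun x _ => ?_
    rw [hTdef]
    rw [hderiv1 a x]
    rfl
  rw [hrepr s, hrepr t]
  exact hconst
end
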